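/- arXiv:math/0612490 — 6 statements merged into one kernel-verified Lean document; each statement's English description precedes it below -/
import Mathlib

section
/- Let $X_i$ be i.i.d. standard exponential, $S_k = \sum_{i=1}^k X_i$, and define $G_n(t) = \mathbb{P}\{\min_{1\le k \le n} \frac{2}{k(k+1)} \sum_{i=1}^k S_i \ge t\}$ and $G(t) = \mathbb{P}\{\inf_{k\ge 1} \frac{2}{k(k+1)} \sum_{i=1}^k S_i \ge t\}$. Then for every $\varepsilon \in (0,1)$, $G_n \to G$ uniformly on $[0, 1-\varepsilon]$. -/
open MeasureTheory ProbabilityTheory Real Finset Filter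
open scoped NNReal ENNReal Topology


lemma exp_pdf_mul_eq : (fun x : ℝ => exponentialPDFReal 1 x * x)
    = Set.indicator (Set.Ioi (0:ℝ)) (fun x => Real.exp (-x) * x) := by
  funext x
  rw [Set.indicator_apply]
  simp only [exponentialPDFReal, gammaPDFReal, Set.mem_Ioi]
  rcases lt_trichotomy x 0 with h | h | h
  · rw [if_neg (not_le.2 h), if_neg (not_lt.2 h.le)]; ring
  · subst h; simp
  · rw [if_pos h.le, if_pos h]
    simp [Real.Gamma_one]

lemma exp_on_Ioi : Set.EqOn (fun x : ℝ => Real.exp (-x) * x ^ ((2:ℝ)-1))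
    (fun x => Real.exp (-x) * x) (Set.Ioi 0) := fun x _ => by norm_num

lemma exp_integrable : Integrable id (expMeasure 1) := by
  have hd : Measurable fun x => Real.toNNReal (exponentialPDFReal 1 x) :=
    (measurable_exponentialPDFReal 1).real_toNNReal
  have h1 : expMeasure 1 = volume.withDensity fun x => ((Real.toNNReal (exponentialPDFReal 1 x) : ℝ≥0) : ℝ≥0∞) := rfl
  rw [h1, integrable_withDensity_iff_integrable_smul hd]
  have h2 : (fun x : ℝ => Real.toNNReal (exponentialPDFReal 1 x) • id x)
      = Set.indicator (Set.Ioi (0:ℝ)) (fun x => Real.exp (-x) * x) := by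
    rw [← exp_pdf_mul_eq]
    funext x
    simp [NNReal.smul_def, Real.coe_toNNReal _ (exponentialPDFReal_nonneg one_pos x)]
  rw [h2, integrable_indicator_iff measurableSet_Ioi]
  exact (Real.GammaIntegral_convergent (by norm_num : (0:ℝ) < 2)).congr_fun exp_on_Ioi
    measurableSet_Ioi

lemma exp_mean : ∫ x, x ∂(expMeasure 1) = 1 := by
  have hd : Measurable fun x => Real.toNNReal (exponentialPDFReal 1 x) :=
    (measurable_exponentialPDFReal 1).real_toNNReal
  have h1 : expMeasure 1 = volume.withDensity fun x => ((Real.toNNReal (exponentialPDFReal 1 x) : ℝ≥0) : ℝ≥0∞) := rfl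
  rw [h1, integral_withDensity_eq_integral_smul hd]
  have h2 : (fun x : ℝ => Real.toNNReal (exponentialPDFReal 1 x) • x)
      = Set.indicator (Set.Ioi (0:ℝ)) (fun x => Real.exp (-x) * x) := by
    rw [← exp_pdf_mul_eq]
    funext x
    simp [NNReal.smul_def, Real.coe_toNNReal _ (exponentialPDFReal_nonneg one_pos x)]
  rw [h2, integral_indicator measurableSet_Ioi]
  calc ∫ x in Set.Ioi (0:ℝ), Real.exp (-x) * x
      = ∫ x in Set.Ioi (0:ℝ), Real.exp (-x) * x ^ ((2:ℝ)-1) :=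
        (setIntegral_congr_fun measurableSet_Ioi exp_on_Ioi).symm
    _ = Real.Gamma 2 := (Real.Gamma_eq_integral (by norm_num)).symm
    _ = 1 := Real.Gamma_two

lemma gauss_real (n : ℕ) : ∑ i ∈ range n, (i:ℝ) = n * ((n:ℝ)-1)/2 := by
  induction n with
  | zero => simp
  | succ m ih => rw [Finset.sum_range_succ, ih]; push_cast; ring

lemma range_succ_insert (m : ℕ) : range (m+1) = insert 0 (Icc 1 m) := by
  ext i; simp [Nat.lt_succ_iff]; omega

lemma cesaro_weighted (S : ℕ → ℝ) (hS0 : S 0 = 0)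
    (h : Tendsto (fun j : ℕ => S j / j) atTop (𝓝 1)) :
    Tendsto (fun k : ℕ => 2 / ((k:ℝ) * ((k:ℝ)+1)) * ∑ j ∈ Icc 1 k, S j) atTop (𝓝 1) := by
  have hf0 : Tendsto (fun j : ℕ => (S j - j)/j) atTop (𝓝 0) := by
    have h' := h.sub (tendsto_const_nhds (x := (1:ℝ)))
    rw [sub_self] at h'
    refine Filter.Tendsto.congr' ?_ h'
    filter_upwards [eventually_ge_atTop 1] with j hj
    have hj0 : (j:ℝ) ≠ 0 := Nat.cast_ne_zero.2 (by omega)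
    field_simp
  have hlo : (fun j : ℕ => S j - (j:ℝ)) =o[atTop] (fun j : ℕ => (j:ℝ)) := by
    refine (Asymptotics.isLittleO_iff_tendsto' ?_).2 hf0
    filter_upwards [eventually_ge_atTop 1] with j hj hj0
    exact absurd hj0 (Nat.cast_ne_zero.2 (by omega))
  have hgsum : Tendsto (fun n : ℕ => ∑ i ∈ range n, (i:ℝ)) atTop atTop := by
    apply tendsto_atTop_mono _ (tendsto_atTop_add_const_right _ (-1) (tendsto_natCast_atTop_atTop (R := ℝ)))
    intro n
    cases n with
    | zero => simp
    | succ m =>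
      have h1 : (m:ℝ) ≤ ∑ i ∈ range (m+1), (i:ℝ) :=
        Finset.single_le_sum (f := fun i : ℕ => (i:ℝ)) (fun i _ => Nat.cast_nonneg i)
          (self_mem_range_succ m)
      push_cast
      linarith
  have hsum := (Asymptotics.IsLittleO.sum_range hlo (by intro i; positivity) hgsum).comp_tendsto
    (tendsto_add_atTop_nat 1)
  have hdiv := hsum.tendsto_div_nhds_zero
  have hlim := (tendsto_const_nhds (x := (1:ℝ))).add hdiv
  rw [add_zero] at hlim
  refine Filter.Tendsto.congr' ?_ hlim
  filter_upwards [eventually_ge_atTop 1] with k hk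
  simp only [Function.comp_apply]
  have hk0 : (k:ℝ) ≠ 0 := Nat.cast_ne_zero.2 (by omega)
  have hk1 : (k:ℝ)+1 ≠ 0 := by positivity
  rw [Finset.sum_sub_distrib, gauss_real (k+1), range_succ_insert, Finset.sum_insert (by simp),
    hS0, zero_add]
  push_cast
  field_simp
  rw [add_sub_cancel_right]
  field_simp
  ring

/-- With `G_n(t) = P{min_{1≤k≤n} (2/(k(k+1))) ∑_{i=1}^k S_i ≥ t}` and
`G(t) = P{inf_{k≥1} (2/(k(k+1))) ∑_{i=1}^k S_i ≥ t}` for an exponential random walk,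
for every `ε ∈ (0,1)`, `G_n → G` uniformly on `[0, 1-ε]`. -/
theorem stmt_4 {Ω : Type*} [MeasurableSpace Ω] (μ : Measure Ω) [IsProbabilityMeasure μ]
    (X : ℕ → Ω → ℝ) (hmeas : ∀ i, Measurable (X i))
    (hindep : iIndepFun X μ)
    (hdist : ∀ i, μ.map (X i) = expMeasure 1)
    (ε : ℝ) (hε : ε ∈ Set.Ioo (0 : ℝ) 1) :
    TendstoUniformlyOn
      (fun (n : ℕ) (t : ℝ) =>
        (μ {ω | ∀ k ∈ Icc 1 n,
            t ≤ 2 / ((k : ℝ) * ((k : ℝ) + 1)) *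
              ∑ j ∈ Icc 1 k, ∑ i ∈ Icc 1 j, X i ω}).toReal)
      (fun t =>
        (μ {ω | ∀ k : ℕ, 1 ≤ k →
            t ≤ 2 / ((k : ℝ) * ((k : ℝ) + 1)) *
              ∑ j ∈ Icc 1 k, ∑ i ∈ Icc 1 j, X i ω}).toReal)
      atTop (Set.Icc 0 (1 - ε)) := by
  obtain ⟨hε0, hε1⟩ := hε
  -- basic facts
  have hident : ∀ i, IdentDistrib (X i) (X 0) μ μ :=
    fun i => ⟨(hmeas i).aemeasurable, (hmeas 0).aemeasurable, by rw [hdist i, hdist 0]⟩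
  have hint : Integrable (X 0) μ := by
    have h := exp_integrable
    rw [← hdist 0] at h
    exact (integrable_map_measure aestronglyMeasurable_id (hmeas 0).aemeasurable).mp h
  have hmean : μ[X 0] = 1 := by
    have h : ∫ x, x ∂(μ.map (X 0)) = 1 := by rw [hdist 0]; exact exp_mean
    rwa [integral_map (f := fun x => x) (hmeas 0).aemeasurable aestronglyMeasurable_id] at h
  have hpair : Pairwise (Function.onFun (IndepFun · · μ) X) := fun i j hij => hindep.indepFun hij
  have hslln := strong_law_ae_real X hint hpair hident
  rw [hmean] at hslln
  -- a.e. convergence of the statistic to 1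
  have hconv : ∀ᵐ ω ∂μ, Tendsto
      (fun k : ℕ => 2 / ((k : ℝ) * ((k : ℝ) + 1)) * ∑ j ∈ Icc 1 k, ∑ i ∈ Icc 1 j, X i ω)
      atTop (𝓝 1) := by
    filter_upwards [hslln] with ω hω
    refine cesaro_weighted (fun j => ∑ i ∈ Icc 1 j, X i ω) (by simp) ?_
    have h1 := hω.comp (tendsto_add_atTop_nat 1)
    have h2 : Tendsto (fun j : ℕ => ((j:ℝ)+1)/j) atTop (𝓝 1) := by
      have h' := (tendsto_const_nhds (x := (1:ℝ))).add tendsto_one_div_atTop_nhds_zero_nat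
      rw [add_zero] at h'
      refine Filter.Tendsto.congr' ?_ h'
      filter_upwards [eventually_ge_atTop 1] with j hj
      have hj0 : (j:ℝ) ≠ 0 := Nat.cast_ne_zero.2 (by omega)
      field_simp
    have h3 : Tendsto (fun j : ℕ => X 0 ω / (j:ℝ)) atTop (𝓝 0) :=
      tendsto_const_div_atTop_nhds_zero_nat _
    have h4 := (h1.mul h2).sub h3
    rw [one_mul, sub_zero] at h4
    refine Filter.Tendsto.congr' ?_ h4
    filter_upwards [eventually_ge_atTop 1] with j hj
    simp only [Function.comp_apply]
    have hj0 : (j:ℝ) ≠ 0 := Nat.cast_ne_zero.2 (by omega)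
    have hj1 : (j:ℝ)+1 ≠ 0 := by positivity
    have hr : ∑ i ∈ range (j+1), X i ω = X 0 ω + ∑ i ∈ Icc 1 j, X i ω := by
      rw [range_succ_insert, Finset.sum_insert (by simp)]
    rw [hr]
    push_cast
    field_simp
    ring
  -- the bad sets
  set B : ℕ → Set Ω := fun n => {ω | ∃ k, n < k ∧
      2 / ((k : ℝ) * ((k : ℝ) + 1)) * ∑ j ∈ Icc 1 k, ∑ i ∈ Icc 1 j, X i ω < 1 - ε} with hBdef
  have hTk : ∀ k : ℕ, Measurable fun ω =>
      2 / ((k : ℝ) * ((k : ℝ) + 1)) * ∑ j ∈ Icc 1 k, ∑ i ∈ Icc 1 j, X i ω :=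
    fun k => (Finset.measurable_sum _ fun j _ => Finset.measurable_sum _ fun i _ =>
      hmeas i).const_mul _
  have hBmeas : ∀ n, MeasurableSet (B n) := by
    intro n
    have : B n = ⋃ k, ⋃ (_ : n < k),
        {ω | 2 / ((k : ℝ) * ((k : ℝ) + 1)) * ∑ j ∈ Icc 1 k, ∑ i ∈ Icc 1 j, X i ω < 1 - ε} := by
      ext ω; simp [hBdef]
    rw [this]
    exact MeasurableSet.iUnion fun k => MeasurableSet.iUnion fun _ =>
      measurableSet_lt (hTk k) measurable_const
  have hBanti : Antitone B := by
    intro m n hmn ω hω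
    obtain ⟨k, hk, h⟩ := hω
    exact ⟨k, lt_of_le_of_lt hmn hk, h⟩
  have hBlim : Tendsto (fun n => μ (B n)) atTop (𝓝 (μ (⋂ n, B n))) :=
    tendsto_measure_iInter_atTop (fun n => (hBmeas n).nullMeasurableSet) hBanti
      ⟨0, measure_ne_top μ _⟩
  have hBnull : μ (⋂ n, B n) = 0 := by
    refine measure_mono_null ?_ (ae_iff.1 hconv)
    intro ω hω hten
    have hev : ∀ᶠ (k : ℕ) in atTop,
        1 - ε < 2 / ((k : ℝ) * ((k : ℝ) + 1)) * ∑ j ∈ Icc 1 k, ∑ i ∈ Icc 1 j, X i ω :=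
      hten.eventually (eventually_gt_nhds (by linarith))
    obtain ⟨N, hN⟩ := eventually_atTop.1 hev
    obtain ⟨k, hk, hlt⟩ := Set.mem_iInter.1 hω N
    exact absurd (hN k hk.le) (not_lt.2 hlt.le)
  rw [hBnull] at hBlim
  have hB0 : Tendsto (fun n => (μ (B n)).toReal) atTop (𝓝 0) := by
    have := (ENNReal.tendsto_toReal (by simp)).comp hBlim
    simpa [Function.comp_def] using this
  -- conclusion
  rw [Metric.tendstoUniformlyOn_iff]
  intro δ hδ
  filter_upwards [hB0.eventually (eventually_lt_nhds hδ)] with n hn t ht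
  set A : Set Ω := {ω | ∀ k : ℕ, 1 ≤ k →
      t ≤ 2 / ((k : ℝ) * ((k : ℝ) + 1)) * ∑ j ∈ Icc 1 k, ∑ i ∈ Icc 1 j, X i ω} with hAdef
  set An : Set Ω := {ω | ∀ k ∈ Icc 1 n,
      t ≤ 2 / ((k : ℝ) * ((k : ℝ) + 1)) * ∑ j ∈ Icc 1 k, ∑ i ∈ Icc 1 j, X i ω} with hAndef
  have hAsub : A ⊆ An := fun ω h k hk => h k (Finset.mem_Icc.1 hk).1
  have hAn_sub : An ⊆ A ∪ B n := by
    intro ω hω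
    by_cases h : ω ∈ A
    · exact Or.inl h
    · right
      rw [hAdef] at h
      simp only [Set.mem_setOf_eq, not_forall, not_le] at h
      obtain ⟨k, hk1, hk2⟩ := h
      refine ⟨k, ?_, lt_of_lt_of_le hk2 ht.2⟩
      by_contra hnk
      push_neg at hnk
      exact absurd (hω k (Finset.mem_Icc.2 ⟨hk1, hnk⟩)) (not_le.2 hk2)
  have h1 : (μ A).toReal ≤ (μ An).toReal :=
    ENNReal.toReal_mono (measure_ne_top μ _) (measure_mono hAsub)
  have h2 : (μ An).toReal ≤ (μ A).toReal + (μ (B n)).toReal := by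
    calc (μ An).toReal ≤ (μ A + μ (B n)).toReal := by
          refine ENNReal.toReal_mono ?_ (le_trans (measure_mono hAn_sub) (measure_union_le _ _))
          exact ENNReal.add_ne_top.2 ⟨measure_ne_top μ _, measure_ne_top μ _⟩
      _ = (μ A).toReal + (μ (B n)).toReal :=
          ENNReal.toReal_add (measure_ne_top μ _) (measure_ne_top μ _)
  rw [Real.dist_eq, abs_sub_lt_iff]
  constructor <;> linarith [ENNReal.toReal_nonneg (a := μ (B n))]
end

section
/- With $G_n$ and $G$ as in the area problem for an exponential random walk, for all $t \in [0,1)$ and all $n \ge 1$: $0 \le G_n(t) - G(t) \le \mathbb{P}\{\inf_{i > n} S_i / i < t\}$, where $S_i$ is a standard exponential random walk. -/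
open MeasureTheory ProbabilityTheory Real Finset

/-- For all `t ∈ [0,1)` and `n ≥ 1`:
`0 ≤ G_n(t) - G(t) ≤ P{inf_{i>n} S_i/i < t}` for an exponential random walk. -/
theorem stmt_5 {Ω : Type*} [MeasurableSpace Ω] (μ : Measure Ω) [IsProbabilityMeasure μ]
    (X : ℕ → Ω → ℝ) (hmeas : ∀ i, Measurable (X i))
    (hindep : iIndepFun X μ)
    (hdist : ∀ i, μ.map (X i) = expMeasure 1) :
    ∀ t ∈ Set.Ico (0 : ℝ) 1, ∀ n : ℕ, 1 ≤ n →
      (μ {ω | ∀ k : ℕ, 1 ≤ k →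
          t ≤ 2 / ((k : ℝ) * ((k : ℝ) + 1)) *
            ∑ j ∈ Icc 1 k, ∑ i ∈ Icc 1 j, X i ω}).toReal
        ≤ (μ {ω | ∀ k ∈ Icc 1 n,
            t ≤ 2 / ((k : ℝ) * ((k : ℝ) + 1)) *
              ∑ j ∈ Icc 1 k, ∑ i ∈ Icc 1 j, X i ω}).toReal ∧
      (μ {ω | ∀ k ∈ Icc 1 n,
          t ≤ 2 / ((k : ℝ) * ((k : ℝ) + 1)) *
            ∑ j ∈ Icc 1 k, ∑ i ∈ Icc 1 j, X i ω}).toReal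
        - (μ {ω | ∀ k : ℕ, 1 ≤ k →
            t ≤ 2 / ((k : ℝ) * ((k : ℝ) + 1)) *
              ∑ j ∈ Icc 1 k, ∑ i ∈ Icc 1 j, X i ω}).toReal
        ≤ (μ {ω | ∃ i : ℕ, n < i ∧
            (∑ m ∈ Icc 1 i, X m ω) / (i : ℝ) < t}).toReal := by
  intro t ht n hn
  set A : Set Ω := {ω | ∀ k : ℕ, 1 ≤ k →
      t ≤ 2 / ((k : ℝ) * ((k : ℝ) + 1)) * ∑ j ∈ Icc 1 k, ∑ i ∈ Icc 1 j, X i ω} with hA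
  set An : Set Ω := {ω | ∀ k ∈ Icc 1 n,
      t ≤ 2 / ((k : ℝ) * ((k : ℝ) + 1)) * ∑ j ∈ Icc 1 k, ∑ i ∈ Icc 1 j, X i ω} with hAn
  set B : Set Ω := {ω | ∃ i : ℕ, n < i ∧
      (∑ m ∈ Icc 1 i, X m ω) / (i : ℝ) < t} with hB
  have hsub1 : A ⊆ An := fun ω hω k hk => hω k (mem_Icc.mp hk).1
  have hsub2 : An ⊆ A ∪ B := by
    intro ω hω
    by_cases hb : ω ∈ B
    · exact Or.inr hb
    · left
      simp only [hB, Set.mem_setOf_eq, not_exists, not_and, not_lt] at hb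
      -- hb : ∀ i, n < i → t ≤ (∑ m ∈ Icc 1 i, X m ω) / i
      intro k hk
      rcases le_or_gt k n with hkn | hkn
      · exact hω k (mem_Icc.mpr ⟨hk, hkn⟩)
      · -- k > n
        have hSj : ∀ j : ℕ, n < j → t * (j : ℝ) ≤ ∑ m ∈ Icc 1 j, X m ω := by
          intro j hj
          have hjpos : (0 : ℝ) < (j : ℝ) := by
            have : 0 < j := Nat.lt_of_lt_of_le (Nat.pos_of_ne_zero (by omega)) le_rfl
            exact_mod_cast this
          have := hb j hj
          rw [le_div_iff₀ hjpos] at this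
          exact this
        -- base: partial-sum bound at n
        have hnpos : (0 : ℝ) < (n : ℝ) * ((n : ℝ) + 1) := by
          have : (0 : ℝ) < (n : ℝ) := by exact_mod_cast hn
          positivity
        have hbase : t * ((n : ℝ) * ((n : ℝ) + 1) / 2)
            ≤ ∑ j ∈ Icc 1 n, ∑ i ∈ Icc 1 j, X i ω := by
          have h := hω n (mem_Icc.mpr ⟨hn, le_rfl⟩)
          rw [div_mul_eq_mul_div, le_div_iff₀ hnpos] at h
          nlinarith [h]
        -- induction: for all k ≥ n
        have key : ∀ k : ℕ, n ≤ k →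
            t * ((k : ℝ) * ((k : ℝ) + 1) / 2) ≤ ∑ j ∈ Icc 1 k, ∑ i ∈ Icc 1 j, X i ω := by
          intro k hnk
          induction k, hnk using Nat.le_induction with
          | base => exact hbase
          | succ m hm ih =>
            have hsum : ∑ j ∈ Icc 1 (m + 1), ∑ i ∈ Icc 1 j, X i ω
                = (∑ j ∈ Icc 1 m, ∑ i ∈ Icc 1 j, X i ω) + ∑ i ∈ Icc 1 (m + 1), X i ω := by
              rw [Finset.sum_Icc_succ_top (by omega)]
            have hS : t * ((m : ℝ) + 1) ≤ ∑ i ∈ Icc 1 (m + 1), X i ω := by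
              have := hSj (m + 1) (by omega)
              push_cast at this ⊢
              linarith
            rw [hsum]
            push_cast
            nlinarith [ih]
        have hkey := key k hkn.le
        have hkpos : (0 : ℝ) < (k : ℝ) * ((k : ℝ) + 1) := by
          have : (0 : ℝ) < (k : ℝ) := by exact_mod_cast hk
          positivity
        rw [div_mul_eq_mul_div, le_div_iff₀ hkpos]
        nlinarith [hkey]
  have h1 : μ A ≤ μ An := measure_mono hsub1
  have h2 : μ An ≤ μ A + μ B := (measure_mono hsub2).trans (measure_union_le _ _)
  refine ⟨ENNReal.toReal_mono (measure_ne_top μ An) h1, ?_⟩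
  have h3 : (μ An).toReal ≤ (μ A).toReal + (μ B).toReal := by
    have := ENNReal.toReal_mono
      (by simp [ENNReal.add_ne_top, measure_ne_top]) h2
    rwa [ENNReal.toReal_add (measure_ne_top μ A) (measure_ne_top μ B)] at this
  linarith
end

section
/- Let $A_n$ be the $n \times n$ lower triangular matrix with entries $(A_n)_{k,i} = \frac{2(k-i+1)}{k(k+1)}$ for $i \le k$ and $0$ otherwise. Then $A_n$ is invertible and its inverse $L_n$ has entries $(L_n)_{k,k} = \frac{k(k+1)}{2}$, $(L_n)_{k,k-1} = -(k-1)k$, $(L_n)_{k,k-2} = \frac{(k-2)(k-1)}{2}$, and $0$ elsewhere. -/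
/-!
Writing `T` for the lower-triangular matrix of ones (partial sums) and `D` for the diagonal
matrix with entries `2 / ((k+1)(k+2))`, the area matrix factors as `A = D T²`, since
`(T²)_{k,i} = k - i + 1` counts the indices between `i` and `k`. The partial-sum matrix is
inverted by the difference matrix `1 - S`, with `S` the subdiagonal shift, so
`A⁻¹ = (1 - S)² D⁻¹`, and `(1 - S)² = 1 - 2S + S²` makes this the tridiagonal matrix `L`.
Indices are 0-based, so the paper's `k` is `k.1 + 1` here.
-/

open Matrix

namespace AreaMatrix

def lowerShift (n : ℕ) (R : Type*) [Zero R] [One R] : Matrix (Fin n) (Fin n) R :=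
  of fun k i => if i.1 + 1 = k.1 then 1 else 0

def lowerOnes (n : ℕ) (R : Type*) [Zero R] [One R] : Matrix (Fin n) (Fin n) R :=
  of fun k i => if i ≤ k then 1 else 0

variable {n : ℕ} {R : Type*}

theorem lowerShift_mul_apply [NonAssocSemiring R] (M : Matrix (Fin n) (Fin n) R) (k j : Fin n) :
    (lowerShift n R * M) k j = if h : 0 < k.1 then M ⟨k.1 - 1, by omega⟩ j else 0 := by
  simp only [mul_apply, lowerShift, of_apply, ite_mul, one_mul, zero_mul]
  split_ifs with hk
  · rw [Finset.sum_eq_single ⟨k.1 - 1, by omega⟩ (fun i _ hi => if_neg ?_) (by simp)]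
    · exact if_pos (by simp; omega)
    · exact fun h => hi (Fin.ext (by simp; omega))
  · exact Finset.sum_eq_zero fun i _ => if_neg (by omega)

theorem lowerShift_mul_lowerShift_apply [NonAssocSemiring R] (k i : Fin n) :
    (lowerShift n R * lowerShift n R) k i = if i.1 + 2 = k.1 then 1 else 0 := by
  rw [lowerShift_mul_apply]
  split_ifs <;> simp_all [lowerShift] <;> omega

theorem lowerShift_mul_lowerOnes_apply [NonAssocSemiring R] (k j : Fin n) :
    (lowerShift n R * lowerOnes n R) k j = if j < k then 1 else 0 := by
  rw [lowerShift_mul_apply]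
  simp only [lowerOnes, of_apply, Fin.le_def, Fin.lt_def]
  split_ifs <;> first | rfl | omega

theorem one_sub_lowerShift_mul_lowerOnes [Ring R] :
    (1 - lowerShift n R) * lowerOnes n R = 1 := by
  ext k j
  rw [sub_mul, one_mul, Matrix.sub_apply, lowerShift_mul_lowerOnes_apply, one_apply, lowerOnes,
    of_apply]
  rcases lt_trichotomy j k with h | rfl | h
  · simp [h.le, h, h.ne']
  · simp
  · simp [h.not_ge, h.not_gt, h.ne]

theorem one_sub_lowerShift_sq_mul_lowerOnes_sq [Ring R] :
    (1 - lowerShift n R) * (1 - lowerShift n R) * (lowerOnes n R * lowerOnes n R) = 1 := by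
  rw [Matrix.mul_assoc, ← Matrix.mul_assoc (1 - lowerShift n R) (lowerOnes n R),
    one_sub_lowerShift_mul_lowerOnes, Matrix.one_mul, one_sub_lowerShift_mul_lowerOnes]

theorem lowerOnes_mul_lowerOnes_apply [Ring R] (k j : Fin n) :
    (lowerOnes n R * lowerOnes n R) k j = if j ≤ k then (k.1 : R) - j.1 + 1 else 0 := by
  have hsum : (lowerOnes n R * lowerOnes n R) k j = ((Finset.Icc j k).card : R) := by
    simp only [mul_apply, lowerOnes, of_apply, mul_ite, mul_one, mul_zero, ← ite_and]
    rw [Finset.sum_boole]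
    congr 2
    ext i
    simp
  rw [hsum, Fin.card_Icc]
  split_ifs with h
  · rw [Fin.le_iff_val_le_val] at h
    rw [Nat.cast_sub (by omega)]
    push_cast
    abel
  · rw [Fin.le_iff_val_le_val] at h
    rw [Nat.sub_eq_zero_of_le (by omega), Nat.cast_zero]

theorem one_sub_lowerShift_sq_apply [Ring R] (k i : Fin n) :
    ((1 - lowerShift n R) * (1 - lowerShift n R)) k i =
      (if i.1 = k.1 then 1 else 0) - (if i.1 + 1 = k.1 then 1 else 0) -
        (if i.1 + 1 = k.1 then 1 else 0) + (if i.1 + 2 = k.1 then 1 else 0) := by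
  rw [show (1 - lowerShift n R) * (1 - lowerShift n R) =
      1 - lowerShift n R - lowerShift n R + lowerShift n R * lowerShift n R by noncomm_ring,
    Matrix.add_apply, lowerShift_mul_lowerShift_apply]
  simp only [Matrix.sub_apply, one_apply, lowerShift, of_apply, Fin.ext_iff, eq_comm]

theorem eq_diagonal_mul_lowerOnes_mul_lowerOnes {A : Matrix (Fin n) (Fin n) ℝ}
    (hA : ∀ k i : Fin n, A k i =
      if i ≤ k then 2 * ((k.1 : ℝ) - (i.1 : ℝ) + 1) / (((k.1 : ℝ) + 1) * ((k.1 : ℝ) + 2))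
      else 0) :
    A = diagonal (fun k : Fin n => 2 / (((k.1 : ℝ) + 1) * ((k.1 : ℝ) + 2))) *
      (lowerOnes n ℝ * lowerOnes n ℝ) := by
  ext k i
  rw [hA, diagonal_mul, lowerOnes_mul_lowerOnes_apply]
  split_ifs
  · ring
  · simp

theorem eq_one_sub_lowerShift_sq_mul_diagonal {L : Matrix (Fin n) (Fin n) ℝ}
    (hL : ∀ k i : Fin n, L k i =
      if i.1 = k.1 then ((k.1 : ℝ) + 1) * ((k.1 : ℝ) + 2) / 2
      else if i.1 + 1 = k.1 then -((k.1 : ℝ) * ((k.1 : ℝ) + 1))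
      else if i.1 + 2 = k.1 then ((k.1 : ℝ) - 1) * (k.1 : ℝ) / 2
      else 0) :
    L = (1 - lowerShift n ℝ) * (1 - lowerShift n ℝ) *
      diagonal (fun i : Fin n => ((i.1 : ℝ) + 1) * ((i.1 : ℝ) + 2) / 2) := by
  ext k i
  rw [hL, mul_diagonal, one_sub_lowerShift_sq_apply]
  obtain ⟨k, hk⟩ := k
  dsimp only
  split_ifs <;> first | omega | (subst k; push_cast; ring) | ring

end AreaMatrix

/-- The lower-triangular area matrix `A_n` with entries `(A_n)_{k,i} = 2(k-i+1)/(k(k+1))`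
for `i ≤ k` (1-based indices) is invertible, and its inverse `L_n` is tridiagonal with
`(L_n)_{k,k} = k(k+1)/2`, `(L_n)_{k,k-1} = -(k-1)k`, `(L_n)_{k,k-2} = (k-2)(k-1)/2`. -/
theorem stmt_9 (n : ℕ) (A L : Matrix (Fin n) (Fin n) ℝ)
    (hA : ∀ k i : Fin n, A k i =
      if i ≤ k then 2 * ((k.1 : ℝ) - (i.1 : ℝ) + 1) / (((k.1 : ℝ) + 1) * ((k.1 : ℝ) + 2))
      else 0)
    (hL : ∀ k i : Fin n, L k i =
      if i.1 = k.1 then ((k.1 : ℝ) + 1) * ((k.1 : ℝ) + 2) / 2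
      else if i.1 + 1 = k.1 then -((k.1 : ℝ) * ((k.1 : ℝ) + 1))
      else if i.1 + 2 = k.1 then ((k.1 : ℝ) - 1) * (k.1 : ℝ) / 2
      else 0) :
    IsUnit A ∧ A⁻¹ = L := by
  have hdiag : diagonal (fun i : Fin n => ((i.1 : ℝ) + 1) * ((i.1 : ℝ) + 2) / 2) *
      diagonal (fun k : Fin n => 2 / (((k.1 : ℝ) + 1) * ((k.1 : ℝ) + 2))) = 1 := by
    rw [diagonal_mul_diagonal, ← diagonal_one]
    congr 1
    ext i
    field_simp
  have hLA : L * A = 1 := by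
    rw [AreaMatrix.eq_one_sub_lowerShift_sq_mul_diagonal hL,
      AreaMatrix.eq_diagonal_mul_lowerOnes_mul_lowerOnes hA, Matrix.mul_assoc,
      ← Matrix.mul_assoc (diagonal _), hdiag, Matrix.one_mul,
      AreaMatrix.one_sub_lowerShift_sq_mul_lowerOnes_sq]
  exact ⟨(isUnit_iff_isUnit_det A).mpr (isUnit_det_of_left_inverse hLA), inv_eq_left_inv hLA⟩
end

section
/- Let $Y_k = \frac{2}{k(k+1)}\sum_{i=1}^k S_i$ for an exponential walk. Then the density of the random vector $(Y_1,\ldots,Y_n)$ at a point $\mathbf{y} \in \mathbb{R}^n$ is $\frac{n!(n+1)!}{2^n} \exp\left(-\frac{n(n+1)}{2} y_n + \frac{(n-1)n}{2} y_{n-1}\right)$ on the cone $\{L_n \mathbf{y} \ge 0\}$ and $0$ elsewhere, where $L_n$ is the inverse of the area matrix $A_n$. -/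
open MeasureTheory ProbabilityTheory Real Finset Matrix
open scoped ENNReal NNReal

lemma lintegral_pi_prod : ∀ (n : ℕ) (μ : Fin n → Measure ℝ), (∀ i, SigmaFinite (μ i)) →
    ∀ (g : Fin n → ℝ → ℝ≥0∞), (∀ i, Measurable (g i)) →
    ∫⁻ x, ∏ i, g i (x i) ∂Measure.pi μ = ∏ i, ∫⁻ t, g i t ∂μ i := by
  intro n
  induction n with
  | zero =>
    intro μ _ g _
    simp [Measure.pi_of_empty]
  | succ n ih =>
    intro μ hσ g hg
    haveI := hσ
    have hmp := measurePreserving_piFinSuccAbove μ 0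
    have hemb : MeasurableEmbedding (MeasurableEquiv.piFinSuccAbove (fun _ : Fin (n+1) => ℝ) 0) :=
      (MeasurableEquiv.piFinSuccAbove _ 0).measurableEmbedding
    have h1 : ∫⁻ x, ∏ i, g i (x i) ∂Measure.pi μ
        = ∫⁻ z : ℝ × (Fin n → ℝ), g 0 z.1 * ∏ j, g j.succ (z.2 j)
            ∂((μ 0).prod (Measure.pi fun j => μ (Fin.succAbove 0 j))) := by
      rw [← hmp.lintegral_comp_emb hemb]
      congr 1
      ext x
      rw [Fin.prod_univ_succ]
      rfl
    have h2 := lintegral_prod_mul (μ := μ 0)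
      (ν := Measure.pi fun j => μ (Fin.succAbove 0 j)) (f := g 0)
      (g := fun y : Fin n → ℝ => ∏ j, g j.succ (y j)) ((hg 0).aemeasurable)
      ((Finset.measurable_prod _ fun j _ => (hg j.succ).comp (measurable_pi_apply j)).aemeasurable)
    rw [h1, h2, ih _ (fun j => hσ _) _ (fun j => hg j.succ), Fin.prod_univ_succ]
    rfl

lemma pi_withDensity (n : ℕ) (f : Fin n → ℝ → ℝ≥0∞) (hf : ∀ i, Measurable (f i))
    (hσ : ∀ i, SigmaFinite ((volume : Measure ℝ).withDensity (f i))) :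
    Measure.pi (fun i => (volume : Measure ℝ).withDensity (f i))
      = (volume : Measure (Fin n → ℝ)).withDensity (fun x => ∏ i, f i (x i)) := by
  haveI := hσ
  refine Measure.pi_eq fun s hs => ?_
  rw [withDensity_apply _ (MeasurableSet.univ_pi hs), ← lintegral_indicator (MeasurableSet.univ_pi hs)]
  have : ∀ x : Fin n → ℝ, (Set.pi Set.univ s).indicator (fun x => ∏ i, f i (x i)) x
      = ∏ i, (s i).indicator (f i) (x i) := by
    intro x
    by_cases hx : x ∈ Set.pi Set.univ s
    · rw [Set.indicator_of_mem hx]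
      exact Finset.prod_congr rfl fun i _ => (Set.indicator_of_mem (hx i trivial) _).symm
    · rw [Set.indicator_of_notMem hx]
      have hex : ∃ i, x i ∉ s i := by
        by_contra h
        push_neg at h
        exact hx fun i _ => h i
      obtain ⟨i, hi⟩ := hex
      exact (Finset.prod_eq_zero (Finset.mem_univ i) (Set.indicator_of_notMem hi _)).symm
  simp_rw [this]
  rw [MeasureTheory.volume_pi, lintegral_pi_prod n _ (fun _ => inferInstance) _
    (fun i => (hf i).indicator (hs i))]
  exact Finset.prod_congr rfl fun i _ => by
    rw [lintegral_indicator (hs i), withDensity_apply _ (hs i)]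

lemma map_withDensity_equiv {α β : Type*} [MeasurableSpace α] [MeasurableSpace β]
    (e : α ≃ᵐ β) (μ : Measure α) (f : β → ℝ≥0∞) (hf : Measurable f) :
    (μ.withDensity (fun x => f (e x))).map e = (μ.map e).withDensity f := by
  ext s hs
  rw [Measure.map_apply e.measurable hs, withDensity_apply _ (e.measurable hs),
    withDensity_apply _ hs, setLIntegral_map hs hf e.measurable]

lemma prod_fin_aux : ∀ n : ℕ, ∏ k : Fin n, (2 / (((k.1:ℝ)+1) * ((k.1:ℝ)+2)))
    = 2^n / (n.factorial * (n+1).factorial) := by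
  intro n
  induction n with
  | zero => simp
  | succ n ih =>
    rw [Fin.prod_univ_castSucc]
    simp only [Fin.coe_castSucc, Fin.val_last]
    rw [ih]
    have h1 : (n.factorial : ℝ) ≠ 0 := Nat.cast_ne_zero.mpr n.factorial_ne_zero
    have h2 : ((n+1).factorial : ℝ) ≠ 0 := Nat.cast_ne_zero.mpr (n+1).factorial_ne_zero
    have h3 : ((n:ℝ)+1) ≠ 0 := by positivity
    have h4 : ((n:ℝ)+2) ≠ 0 := by positivity
    rw [Nat.factorial_succ (n+1), Nat.factorial_succ n]
    push_cast
    field_simp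
    ring

lemma det_A_eq {n : ℕ} (A : Matrix (Fin n) (Fin n) ℝ)
    (hA : ∀ k i : Fin n, A k i =
      if i ≤ k then 2 * ((k.1 : ℝ) - (i.1 : ℝ) + 1) / (((k.1 : ℝ) + 1) * ((k.1 : ℝ) + 2))
      else 0) :
    A.det = 2^n / (n.factorial * (n+1).factorial) := by
  have htri : A.BlockTriangular OrderDual.toDual := by
    intro i j h
    rw [hA]
    rw [if_neg]
    exact fun hle => absurd hle (not_le.mpr h)
  rw [Matrix.det_of_lowerTriangular A htri, ← prod_fin_aux n]
  refine Finset.prod_congr rfl fun k _ => ?_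
  rw [hA, if_pos le_rfl]
  ring

lemma key_sum {n : ℕ} (hn : 2 ≤ n) (A : Matrix (Fin n) (Fin n) ℝ)
    (hA : ∀ k i : Fin n, A k i =
      if i ≤ k then 2 * ((k.1 : ℝ) - (i.1 : ℝ) + 1) / (((k.1 : ℝ) + 1) * ((k.1 : ℝ) + 2))
      else 0) (x : Fin n → ℝ) :
    (n:ℝ)*((n:ℝ)+1)/2 * A.mulVec x ⟨n-1, Nat.sub_lt (by omega) one_pos⟩
      - ((n:ℝ)-1)*(n:ℝ)/2 * A.mulVec x ⟨n-2, Nat.sub_lt (by omega) two_pos⟩ = ∑ i, x i := by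
  have hN1 : (((n-1 : ℕ)) : ℝ) = (n:ℝ) - 1 := by
    have : (1:ℕ) ≤ n := by omega
    push_cast [this]; ring
  have hN2 : (((n-2 : ℕ)) : ℝ) = (n:ℝ) - 2 := by
    push_cast [hn]; ring
  have hn0 : ((n:ℝ)) ≠ 0 := by positivity
  have hn1 : ((n:ℝ)+1) ≠ 0 := by positivity
  have h2n : (2:ℝ) ≤ (n:ℝ) := by exact_mod_cast hn
  have d1 : ((n:ℝ)-1+1) ≠ 0 := by intro h; nlinarith
  have d2 : ((n:ℝ)-1+2) ≠ 0 := by intro h; nlinarith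
  have d3 : ((n:ℝ)-2+1) ≠ 0 := by intro h; nlinarith
  have d4 : ((n:ℝ)-2+2) ≠ 0 := by intro h; nlinarith
  simp only [Matrix.mulVec, dotProduct]
  rw [Finset.mul_sum, Finset.mul_sum, ← Finset.sum_sub_distrib]
  refine Finset.sum_congr rfl fun i _ => ?_
  rw [hA, hA]
  have hle1 : i ≤ (⟨n-1, Nat.sub_lt (by omega) one_pos⟩ : Fin n) := by
    rw [Fin.le_def]; simp only []; omega
  rw [if_pos hle1]
  by_cases hi : i.1 ≤ n - 2
  · rw [if_pos (show i ≤ (⟨n-2, Nat.sub_lt (by omega) two_pos⟩ : Fin n) by rw [Fin.le_def]; simp only []; omega)]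
    simp only [hN1, hN2]
    field_simp
    ring
  · have hieq : i.1 = n - 1 := by omega
    rw [if_neg (by
      intro hle
      exact hi (by simpa using (Fin.le_def.mp hle)))]
    simp only [hN1, hN2, hieq]
    field_simp
    ring

lemma map_pi_exp {Ω : Type*} [MeasurableSpace Ω] (μ : Measure Ω) [IsProbabilityMeasure μ]
    (X : ℕ → Ω → ℝ) (hmeas : ∀ i, Measurable (X i))
    (hindep : iIndepFun X μ)
    (hdist : ∀ i, μ.map (X i) = expMeasure 1) (n : ℕ) :
    μ.map (fun ω (i : Fin n) => X (i.1+1) ω) = Measure.pi (fun _ : Fin n => expMeasure 1) := by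
  haveI : IsProbabilityMeasure (expMeasure 1) := isProbabilityMeasure_expMeasure one_pos
  have hf : Measurable (fun ω (i : Fin n) => X (i.1+1) ω) :=
    measurable_pi_lambda _ fun i => hmeas _
  refine (Measure.pi_eq fun s hs => ?_).symm
  classical
  set t : ℕ → Set ℝ := fun m => if h : m - 1 < n then s ⟨m-1, h⟩ else Set.univ with htdef
  have ht : ∀ i : Fin n, t (i.1+1) = s i := by
    intro i
    simp only [htdef, Nat.add_sub_cancel, i.isLt, dif_pos, Fin.eta]
  have htmeas : ∀ m, MeasurableSet (t m) := by
    intro m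
    by_cases h : m - 1 < n
    · simp only [htdef, dif_pos h]; exact hs _
    · simp only [htdef, dif_neg h]; exact MeasurableSet.univ
  set S : Finset ℕ := Finset.image (fun i : Fin n => i.1+1) Finset.univ with hSdef
  have hinj : ∀ a ∈ (Finset.univ : Finset (Fin n)), ∀ b ∈ Finset.univ,
      a.1+1 = b.1+1 → a = b := fun a _ b _ h => Fin.ext (by omega)
  have hpre : (fun ω (i : Fin n) => X (i.1+1) ω) ⁻¹' (Set.pi Set.univ s)
      = ⋂ m ∈ S, X m ⁻¹' t m := by
    ext ω
    simp only [Set.mem_preimage, Set.mem_pi, Set.mem_univ, forall_true_left, Set.mem_iInter,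
      hSdef, Finset.mem_image, Finset.mem_univ, true_and]
    constructor
    · rintro h m ⟨i, rfl⟩
      rw [ht i]; exact h i
    · intro h i
      have := h (i.1+1) ⟨i, rfl⟩
      rwa [ht i] at this
  rw [Measure.map_apply hf (MeasurableSet.univ_pi hs), hpre,
    hindep.meas_biInter (fun m _ => ⟨t m, htmeas m, rfl⟩)]
  rw [hSdef, Finset.prod_image hinj]
  refine Finset.prod_congr rfl fun i _ => ?_
  rw [← Measure.map_apply (hmeas _) (htmeas _), hdist, ht i]

lemma double_sum_aux (a : ℕ → ℝ) : ∀ K : ℕ, ∑ j ∈ Icc 1 K, ∑ i ∈ Icc 1 j, a i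
    = ∑ i ∈ Icc 1 K, ((K + 1 - i : ℕ) : ℝ) * a i := by
  intro K
  induction K with
  | zero => simp
  | succ K ih =>
    have hins : Icc 1 (K+1) = insert (K+1) (Icc 1 K) := by
      ext m; simp; omega
    rw [hins, Finset.sum_insert (by simp), Finset.sum_insert (by simp), ih, hins,
      Finset.sum_insert (by simp)]
    have h1 : (K + 1 + 1 - (K+1) : ℕ) = 1 := by omega
    rw [h1]
    rw [add_assoc, ← Finset.sum_add_distrib]
    push_cast
    rw [Finset.sum_congr rfl (fun i hi => ?_)]
    · ring
    · have hi' : 1 ≤ i ∧ i ≤ K := by simpa using hi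
      have h2 : (K + 1 + 1 - i : ℕ) = (K + 1 - i) + 1 := by omega
      rw [h2]
      push_cast
      ring

lemma mulvec_form {n : ℕ} (A : Matrix (Fin n) (Fin n) ℝ)
    (hA : ∀ k i : Fin n, A k i =
      if i ≤ k then 2 * ((k.1 : ℝ) - (i.1 : ℝ) + 1) / (((k.1 : ℝ) + 1) * ((k.1 : ℝ) + 2))
      else 0) (k : Fin n) (x : ℕ → ℝ) :
    A.mulVec (fun i : Fin n => x (i.1+1)) k
      = 2 / (((k.1:ℝ)+1) * ((k.1:ℝ)+2)) * ∑ j ∈ Icc 1 (k.1+1), ∑ i ∈ Icc 1 j, x i := by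
  rw [double_sum_aux, Finset.mul_sum]
  rw [show Icc 1 (k.1+1) = Ico 1 (k.1+2) from (Finset.Ico_add_one_right_eq_Icc _ _).symm,
    Finset.sum_Ico_eq_sum_range]
  simp only [Matrix.mulVec, dotProduct]
  have hrw : ∀ i : Fin n, A k i * x (i.1+1)
      = (fun m => (if m ≤ k.1 then 2 * ((k.1 : ℝ) - (m : ℝ) + 1) / (((k.1 : ℝ) + 1) * ((k.1 : ℝ) + 2)) else 0) * x (m+1)) i.1 := by
    intro i
    beta_reduce
    rw [hA]
    by_cases h : i ≤ k
    · rw [if_pos h, if_pos (Fin.le_def.mp h)]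
    · rw [if_neg h, if_neg (fun hh => h (Fin.le_def.mpr hh))]
  rw [Finset.sum_congr rfl (fun i _ => hrw i)]
  beta_reduce
  rw [Fin.sum_univ_eq_sum_range
    (fun m => (if m ≤ k.1 then 2 * ((k.1 : ℝ) - (m : ℝ) + 1) / (((k.1 : ℝ) + 1) * ((k.1 : ℝ) + 2)) else 0) * x (m+1)) n]
  rw [show k.1 + 2 - 1 = k.1 + 1 from by omega]
  rw [← Finset.sum_subset (Finset.range_subset_range.mpr (show k.1+1 ≤ n from k.isLt))
    (fun m _ hm => by
      have hnot : ¬ m ≤ k.1 := fun h => hm (Finset.mem_range.mpr (by omega))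
      rw [if_neg hnot, zero_mul])]
  refine Finset.sum_congr rfl fun m hm => ?_
  have hm' : m ≤ k.1 := by simpa [Nat.lt_succ_iff] using hm
  rw [if_pos hm']
  have h1 : (k.1 + 2 - (1 + m) : ℕ) = k.1 + 1 - m := by omega
  rw [h1]
  have h2 : ((k.1 + 1 - m : ℕ) : ℝ) = (k.1 : ℝ) + 1 - (m:ℝ) := by
    rw [Nat.cast_sub (by omega)]
    push_cast
    ring
  rw [h2, show 1 + m = m + 1 from by omega]
  ring


/-- The density of the vector of normalized areas `(Y_1,…,Y_n)` of an exponential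
random walk is `(n!(n+1)!/2^n) exp(-(n(n+1)/2) y_n + ((n-1)n/2) y_{n-1})` on the cone
`{L_n y ≥ 0}` and `0` elsewhere, where `L_n = A_n⁻¹`. -/
theorem stmt_11 {Ω : Type*} [MeasurableSpace Ω] (μ : Measure Ω) [IsProbabilityMeasure μ]
    (X : ℕ → Ω → ℝ) (hmeas : ∀ i, Measurable (X i))
    (hindep : iIndepFun X μ)
    (hdist : ∀ i, μ.map (X i) = expMeasure 1)
    (n : ℕ) (hn : 2 ≤ n) (A L : Matrix (Fin n) (Fin n) ℝ)
    (hA : ∀ k i : Fin n, A k i =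
      if i ≤ k then 2 * ((k.1 : ℝ) - (i.1 : ℝ) + 1) / (((k.1 : ℝ) + 1) * ((k.1 : ℝ) + 2))
      else 0)
    (hL : L = A⁻¹) :
    μ.map (fun ω (k : Fin n) =>
        2 / (((k.1 : ℝ) + 1) * ((k.1 : ℝ) + 2)) *
          ∑ j ∈ Icc 1 (k.1 + 1), ∑ i ∈ Icc 1 j, X i ω)
      = volume.withDensity
          ({y : Fin n → ℝ | ∀ k : Fin n, 0 ≤ L.mulVec y k}.indicator
            (fun y => ENNReal.ofReal
              ((n.factorial : ℝ) * ((n + 1).factorial : ℝ) / 2 ^ n *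
                Real.exp (-((n : ℝ) * ((n : ℝ) + 1) / 2) * y ⟨n - 1, by omega⟩
                  + ((n : ℝ) - 1) * (n : ℝ) / 2 * y ⟨n - 2, by omega⟩)))) := by
  classical
  have hdet : A.det = 2^n / (n.factorial * (n+1).factorial) := det_A_eq A hA
  have hfac1 : (0:ℝ) < n.factorial := by exact_mod_cast n.factorial_pos
  have hfac2 : (0:ℝ) < (n+1).factorial := by exact_mod_cast (n+1).factorial_pos
  have hdetpos : (0:ℝ) < A.det := by rw [hdet]; positivity
  have hdet0 : A.det ≠ 0 := ne_of_gt hdetpos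
  have hunit : IsUnit A.det := isUnit_iff_ne_zero.mpr hdet0
  have hAL : A * L = 1 := by rw [hL]; exact A.mul_nonsing_inv hunit
  have hLA : L * A = 1 := by rw [hL]; exact A.nonsing_inv_mul hunit
  have hTmeas : Measurable fun v : Fin n → ℝ => A.mulVec v :=
    measurable_pi_lambda _ fun k => by
      simpa [Matrix.mulVec, dotProduct] using
        Finset.measurable_sum Finset.univ fun i _ => (by fun_prop : Measurable fun c : Fin n → ℝ => A k i * c i)
  have hLmeas : Measurable fun v : Fin n → ℝ => L.mulVec v :=
    measurable_pi_lambda _ fun k => by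
      simpa [Matrix.mulVec, dotProduct] using
        Finset.measurable_sum Finset.univ fun i _ => (by fun_prop : Measurable fun c : Fin n → ℝ => L k i * c i)
  let e : (Fin n → ℝ) ≃ᵐ (Fin n → ℝ) :=
    { toFun := fun v => A.mulVec v
      invFun := fun v => L.mulVec v
      left_inv := fun v => by show L *ᵥ (A *ᵥ v) = v; rw [Matrix.mulVec_mulVec, hLA, Matrix.one_mulVec]
      right_inv := fun v => by show A *ᵥ (L *ᵥ v) = v; rw [Matrix.mulVec_mulVec, hAL, Matrix.one_mulVec]
      measurable_toFun := hTmeas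
      measurable_invFun := hLmeas }
  have hfun : (fun ω (k : Fin n) =>
        2 / (((k.1 : ℝ) + 1) * ((k.1 : ℝ) + 2)) *
          ∑ j ∈ Icc 1 (k.1 + 1), ∑ i ∈ Icc 1 j, X i ω)
      = (fun v => A.mulVec v) ∘ (fun ω (i : Fin n) => X (i.1+1) ω) := by
    funext ω
    funext k
    exact (mulvec_form A hA k (fun m => X m ω)).symm
  have hfmeas : Measurable (fun ω (i : Fin n) => X (i.1+1) ω) :=
    measurable_pi_lambda _ fun i => hmeas _
  rw [hfun, ← Measure.map_map hTmeas hfmeas, map_pi_exp μ X hmeas hindep hdist n]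
  have hpdfmeas : Measurable (exponentialPDF 1) :=
    (measurable_exponentialPDFReal 1).ennreal_ofReal
  haveI hprob : IsProbabilityMeasure (expMeasure 1) := isProbabilityMeasure_expMeasure one_pos
  have hexp : expMeasure 1 = (volume : Measure ℝ).withDensity (exponentialPDF 1) := rfl
  have hσ : ∀ _i : Fin n, SigmaFinite ((volume : Measure ℝ).withDensity (exponentialPDF 1)) :=
    fun _ => by rw [← hexp]; infer_instance
  have hpi : (Measure.pi fun _ : Fin n => expMeasure 1)
      = (volume : Measure (Fin n → ℝ)).withDensity (fun x => ∏ i, exponentialPDF 1 (x i)) := by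
    calc Measure.pi (fun _ : Fin n => expMeasure 1)
        = Measure.pi (fun _ : Fin n => (volume : Measure ℝ).withDensity (exponentialPDF 1)) := by
          rw [← hexp]
      _ = _ := pi_withDensity n _ (fun _ => hpdfmeas) hσ
  rw [hpi]
  set g0 : (Fin n → ℝ) → ℝ≥0∞ := fun x => ∏ i, exponentialPDF 1 (x i) with hg0def
  have hg0meas : Measurable g0 :=
    Finset.measurable_prod _ fun i _ => hpdfmeas.comp (measurable_pi_apply i)
  have hcomp : g0 = fun x => (g0 ∘ e.symm) (e x) := by
    funext x
    simp only [Function.comp_apply, MeasurableEquiv.symm_apply_apply]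
  have hmapwd := map_withDensity_equiv e volume (g0 ∘ e.symm) (hg0meas.comp e.symm.measurable)
  have hgoal1 : ((volume : Measure (Fin n → ℝ)).withDensity g0).map (fun v => A.mulVec v)
      = ((volume : Measure (Fin n → ℝ)).map e).withDensity (g0 ∘ e.symm) := by
    conv_lhs => rw [show (fun v : Fin n → ℝ => A.mulVec v) = ⇑e from rfl, hcomp]
    exact hmapwd
  rw [hgoal1]
  have hvol : (volume : Measure (Fin n → ℝ)).map e
      = ENNReal.ofReal |A.det⁻¹| • (volume : Measure (Fin n → ℝ)) := by
    have h := Real.map_matrix_volume_pi_eq_smul_volume_pi hdet0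
    rw [show (⇑e : (Fin n → ℝ) → (Fin n → ℝ)) = ⇑(Matrix.toLin' A) from
      funext fun v => (Matrix.toLin'_apply A v).symm]
    exact h
  rw [hvol, withDensity_smul_measure]
  have hfinal : (ENNReal.ofReal |A.det⁻¹|) • (volume : Measure (Fin n → ℝ)).withDensity (g0 ∘ ⇑e.symm)
      = (volume : Measure (Fin n → ℝ)).withDensity
          (fun y => (ENNReal.ofReal |A.det⁻¹|) * (g0 ∘ ⇑e.symm) y) := by
    rw [← withDensity_smul _ (hg0meas.comp e.symm.measurable)]
    rfl
  rw [hfinal]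
  congr 1
  funext y
  simp only [Function.comp_apply]
  have hesymm : e.symm y = L.mulVec y := rfl
  simp only [hesymm, hg0def]
  by_cases hy : ∀ k : Fin n, 0 ≤ L.mulVec y k
  · rw [Set.indicator_of_mem (by exact hy : y ∈ {y : Fin n → ℝ | ∀ k : Fin n, 0 ≤ L.mulVec y k})]
    have h1 : ∀ i : Fin n, exponentialPDF 1 (L.mulVec y i)
        = ENNReal.ofReal (Real.exp (-(L.mulVec y i))) := fun i => by
      rw [exponentialPDF_of_nonneg (hy i)]
      norm_num
    rw [Finset.prod_congr rfl fun i _ => h1 i,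
      ← ENNReal.ofReal_prod_of_nonneg (fun i _ => (Real.exp_pos _).le),
      ← Real.exp_sum, ← ENNReal.ofReal_mul (abs_nonneg _)]
    have hsum : ∑ i, -(L.mulVec y i)
        = -((n : ℝ) * ((n : ℝ) + 1) / 2) * y ⟨n - 1, by omega⟩
          + ((n : ℝ) - 1) * (n : ℝ) / 2 * y ⟨n - 2, by omega⟩ := by
      have hk := key_sum hn A hA (L.mulVec y)
      rw [show A.mulVec (L.mulVec y) = y from by
        rw [Matrix.mulVec_mulVec, hAL, Matrix.one_mulVec]] at hk
      rw [Finset.sum_neg_distrib, ← hk]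
      ring
    rw [hsum]
    congr 1
    rw [hdet, abs_of_pos (by positivity)]
    field_simp
  · push_neg at hy
    obtain ⟨k, hk⟩ := hy
    rw [Set.indicator_of_notMem (by
      intro hmem
      exact absurd (hmem k) (not_le.mpr hk))]
    rw [Finset.prod_eq_zero (Finset.mem_univ k) (exponentialPDF_of_neg hk), mul_zero]
end

section
/- The constants $c_k$ satisfy $c_k < \frac{(k+1)^k}{(k-1)!}$ for $k \ge 2$, where $c_k$ is defined by $\mathbb{P}\{\min_{1\le i\le k+1} Y_i = Y_k\} = c_k \frac{(k-1)!}{(k+1)^k}$; consequently $c_k = O(\sqrt{k}\, e^k)$ as $k \to \infty$. -/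
open MeasureTheory ProbabilityTheory Real Finset

lemma expM_Iio_zero : expMeasure 1 (Set.Iio 0) = 0 := by
  rw [expMeasure, gammaMeasure, withDensity_apply _ measurableSet_Iio]
  exact lintegral_gammaPDF_of_nonpos le_rfl

lemma expM_Iic (a : ℝ) :
    expMeasure 1 (Set.Iic a) = ENNReal.ofReal (if 0 ≤ a then 1 - Real.exp (-(1*a)) else 0) := by
  rw [expMeasure, gammaMeasure, withDensity_apply _ measurableSet_Iic]
  have := lintegral_exponentialPDF_eq_antiDeriv (r := 1) zero_lt_one a
  simpa [exponentialPDF, exponentialPDFReal, gammaPDF] using this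

lemma expM_Iio_one_pos : 0 < expMeasure 1 (Set.Iio 1) := by
  have h : expMeasure 1 (Set.Iic (1/2 : ℝ)) ≤ expMeasure 1 (Set.Iio 1) :=
    measure_mono (fun x hx => lt_of_le_of_lt hx (by norm_num : (1:ℝ)/2 < 1))
  refine lt_of_lt_of_le ?_ h
  rw [expM_Iic]
  rw [if_pos (by norm_num)]
  have : Real.exp (-(1 * (1/2 : ℝ))) < 1 := by
    apply Real.exp_lt_one_iff.mpr; norm_num
  exact ENNReal.ofReal_pos.mpr (by linarith)

lemma expM_Ioi_pos (a : ℝ) (ha : 0 ≤ a) : 0 < expMeasure 1 (Set.Ioi a) := by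
  have : IsProbabilityMeasure (expMeasure 1) := isProbabilityMeasure_expMeasure zero_lt_one
  have hc : (Set.Iic a)ᶜ = Set.Ioi a := Set.compl_Iic
  rw [← hc, prob_compl_eq_one_sub measurableSet_Iic, expM_Iic, if_pos ha]
  have h1 : ENNReal.ofReal (1 - Real.exp (-(1*a))) < 1 :=
    ENNReal.ofReal_lt_one.mpr (by linarith [Real.exp_pos (-(1*a))])
  exact tsub_pos_iff_lt.mpr h1

lemma stirling_lb (n : ℕ) (hn : 1 ≤ n) :
    Real.sqrt (2 * n) * ((n : ℝ) / Real.exp 1) ^ n ≤ (n.factorial : ℝ) := by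
  obtain ⟨m, rfl⟩ : ∃ m, n = m + 1 := ⟨n - 1, (Nat.succ_pred_eq_of_pos hn).symm⟩
  have ht : Filter.Tendsto (Stirling.stirlingSeq ∘ Nat.succ) Filter.atTop (nhds (Real.sqrt π)) :=
    Stirling.tendsto_stirlingSeq_sqrt_pi.comp (Filter.tendsto_add_atTop_nat 1)
  have h := Stirling.stirlingSeq'_antitone.le_of_tendsto ht m
  have hπ : 1 ≤ Real.sqrt π := by
    rw [show (1:ℝ) = Real.sqrt 1 by simp]
    exact Real.sqrt_le_sqrt (by linarith [Real.pi_gt_three])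
  have h2 := le_trans hπ h
  have hpos : 0 < Real.sqrt (2 * ((m:ℝ)+1)) * (((m:ℝ)+1) / Real.exp 1) ^ (m+1) := by
    positivity
  rw [Function.comp_apply, Stirling.stirlingSeq, Nat.succ_eq_add_one] at h2
  push_cast at h2 ⊢
  rw [one_le_div hpos] at h2
  linarith

lemma growth_bound (k : ℕ) (hk : 2 ≤ k) :
    ((k : ℝ) + 1) ^ k / ((k - 1).factorial : ℝ) ≤ Real.exp 1 * Real.sqrt k * Real.exp k := by
  set K : ℝ := (k : ℝ) with hKdef
  have hK : (2:ℝ) ≤ K := by rw [hKdef]; exact_mod_cast hk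
  have hKpos : (0:ℝ) < K := by linarith
  have hfac : (k.factorial : ℝ) = K * ((k-1).factorial : ℝ) := by
    rw [← Nat.mul_factorial_pred (by omega : k ≠ 0)]; push_cast; ring
  have hGpos : (0:ℝ) < ((k-1).factorial : ℝ) := by positivity
  have hEk : Real.exp 1 ^ k = Real.exp K := by
    rw [← Real.exp_nat_mul, mul_one]
  have hstir := stirling_lb k (by omega)
  have hdivp : ((K : ℝ) / Real.exp 1) ^ k = K ^ k / Real.exp K := by
    rw [div_pow, hEk]
  rw [hdivp] at hstir
  -- h1 : (K+1)^k ≤ e * K^k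
  have h1 : (K + 1) ^ k ≤ Real.exp 1 * K ^ k := by
    have hb : K + 1 ≤ K * Real.exp (1 / K) := by
      have h := Real.add_one_le_exp (1 / K)
      have h2 : K * (1/K + 1) ≤ K * Real.exp (1/K) := by
        apply mul_le_mul_of_nonneg_left h (le_of_lt hKpos)
      have h3 : K * (1/K) = 1 := by field_simp
      nlinarith
    calc (K + 1) ^ k ≤ (K * Real.exp (1/K)) ^ k := by
          apply pow_le_pow_left₀ (by linarith) hb _
      _ = K ^ k * Real.exp (1/K) ^ k := mul_pow _ _ _
      _ = K ^ k * Real.exp 1 := by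
          rw [← Real.exp_nat_mul]
          congr 2
          field_simp
          exact hKdef.symm
      _ = Real.exp 1 * K ^ k := by ring
  have hs2 : K ≤ Real.sqrt K * Real.sqrt (2 * K) := by
    have e1 : Real.sqrt K * Real.sqrt (2 * K) = Real.sqrt (K * (2 * K)) :=
      (Real.sqrt_mul hKpos.le _).symm
    rw [e1]
    calc K = Real.sqrt (K * K) := (Real.sqrt_mul_self hKpos.le).symm
      _ ≤ Real.sqrt (K * (2 * K)) := Real.sqrt_le_sqrt (by nlinarith)
  have hsE : Real.sqrt (2 * K) * (K ^ k / Real.exp K) ≤ (k.factorial : ℝ) := hstir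
  have hf1 : Real.sqrt (2 * K) * K ^ k ≤ (k.factorial : ℝ) * Real.exp K := by
    have h := mul_le_mul_of_nonneg_right hsE (Real.exp_pos K).le
    calc Real.sqrt (2 * K) * K ^ k
        = Real.sqrt (2 * K) * (K ^ k / Real.exp K) * Real.exp K := by
          field_simp
      _ ≤ (k.factorial : ℝ) * Real.exp K := h
  rw [div_le_iff₀ hGpos]
  rw [← mul_le_mul_iff_of_pos_right hKpos]
  have hR : Real.exp 1 * Real.sqrt K * Real.exp K * ((k-1).factorial : ℝ) * K
      = Real.exp 1 * Real.sqrt K * (Real.exp K * (k.factorial : ℝ)) := by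
    rw [hfac]; ring
  rw [hR]
  calc (K + 1) ^ k * K ≤ (Real.exp 1 * K ^ k) * K := by
        apply mul_le_mul_of_nonneg_right h1 (le_of_lt hKpos)
    _ = Real.exp 1 * (K * K ^ k) := by ring
    _ ≤ Real.exp 1 * ((Real.sqrt K * Real.sqrt (2*K)) * K ^ k) := by
        apply mul_le_mul_of_nonneg_left _ (le_of_lt (Real.exp_pos 1))
        apply mul_le_mul_of_nonneg_right hs2 (by positivity)
    _ = Real.exp 1 * Real.sqrt K * (Real.sqrt (2*K) * K ^ k) := by ring
    _ ≤ Real.exp 1 * Real.sqrt K * ((k.factorial : ℝ) * Real.exp K) := by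
        apply mul_le_mul_of_nonneg_left hf1 (by positivity)
    _ = Real.exp 1 * Real.sqrt K * (Real.exp K * (k.factorial : ℝ)) := by ring

/-- The constants `c_k`, defined by `P{min_{1≤i≤k+1} Y_i = Y_k} = c_k (k-1)!/(k+1)^k`,
satisfy `c_k < (k+1)^k/(k-1)!` for `k ≥ 2`; consequently `c_k = O(√k e^k)`. -/
theorem stmt_14 {Ω : Type*} [MeasurableSpace Ω] (μ : Measure Ω) [IsProbabilityMeasure μ]
    (X : ℕ → Ω → ℝ) (hmeas : ∀ i, Measurable (X i))
    (hindep : iIndepFun X μ)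
    (hdist : ∀ i, μ.map (X i) = expMeasure 1)
    (Y : ℕ → Ω → ℝ)
    (hY : ∀ k ω, Y k ω =
      2 / ((k : ℝ) * ((k : ℝ) + 1)) * ∑ j ∈ Icc 1 k, ∑ i ∈ Icc 1 j, X i ω)
    (c : ℕ → ℝ)
    (hc : ∀ k : ℕ, 2 ≤ k →
      (μ {ω | ∀ i ∈ Icc 1 (k + 1), Y k ω ≤ Y i ω}).toReal
        = c k * ((k - 1).factorial : ℝ) / ((k : ℝ) + 1) ^ k) :
    (∀ k : ℕ, 2 ≤ k → c k < ((k : ℝ) + 1) ^ k / ((k - 1).factorial : ℝ)) ∧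
    ∃ C : ℝ, 0 < C ∧ ∀ k : ℕ, 2 ≤ k → c k ≤ C * Real.sqrt k * Real.exp k := by
  -- the minimum event has probability < 1
  have hElt : ∀ k : ℕ, 2 ≤ k →
      (μ {ω | ∀ i ∈ Icc 1 (k + 1), Y k ω ≤ Y i ω}).toReal < 1 := by
    intro k hk
    set E : Set Ω := {ω | ∀ i ∈ Icc 1 (k + 1), Y k ω ≤ Y i ω} with hE
    set A1 : Set Ω := X 1 ⁻¹' Set.Iio 1 with hA1
    set A2 : Set Ω := X 2 ⁻¹' Set.Ioi ((k : ℝ) / 2) with hA2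
    set N : Set Ω := {ω | ∀ i, 0 ≤ X i ω} with hNdef
    have hNc : μ Nᶜ = 0 := by
      refine measure_mono_null (fun ω hω => ?_) (measure_iUnion_null (s := fun i => X i ⁻¹' Set.Iio 0) fun i => ?_)
      · simp only [hNdef, Set.mem_compl_iff, Set.mem_setOf_eq, not_forall, not_le] at hω
        obtain ⟨i, hi⟩ := hω
        exact Set.mem_iUnion.mpr ⟨i, hi⟩
      · rw [← Measure.map_apply (hmeas i) measurableSet_Iio, hdist i]
        exact expM_Iio_zero
    -- positivity of μ (A1 ∩ A2)
    have hInd : IndepFun (X 1) (X 2) μ := hindep.indepFun (by norm_num)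
    have hmul : μ (A1 ∩ A2) = μ A1 * μ A2 :=
      hInd.measure_inter_preimage_eq_mul _ _ measurableSet_Iio measurableSet_Ioi
    have hA1v : μ A1 = expMeasure 1 (Set.Iio 1) := by
      rw [hA1, ← Measure.map_apply (hmeas 1) measurableSet_Iio, hdist 1]
    have hA2v : μ A2 = expMeasure 1 (Set.Ioi ((k : ℝ) / 2)) := by
      rw [hA2, ← Measure.map_apply (hmeas 2) measurableSet_Ioi, hdist 2]
    have hApos : 0 < μ (A1 ∩ A2) := by
      rw [hmul, hA1v, hA2v]
      exact ENNReal.mul_pos (ne_of_gt expM_Iio_one_pos)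
        (ne_of_gt (expM_Ioi_pos _ (by positivity)))
    -- the bad set is disjoint from E
    have hsub : A1 ∩ A2 ∩ N ⊆ Eᶜ := by
      rintro ω ⟨⟨hω1, hω2⟩, hωN⟩ hωE
      simp only [hNdef, Set.mem_setOf_eq] at hωN
      simp only [hA1, Set.mem_preimage, Set.mem_Iio] at hω1
      simp only [hA2, Set.mem_preimage, Set.mem_Ioi] at hω2
      have h1mem : (1 : ℕ) ∈ Icc 1 (k + 1) := mem_Icc.mpr ⟨le_refl 1, by omega⟩
      have hle : Y k ω ≤ Y 1 ω := hωE 1 h1mem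
      have hY1 : Y 1 ω = X 1 ω := by
        rw [hY]; norm_num
      set K : ℝ := (k : ℝ) with hKdef
      have hK : (2:ℝ) ≤ K := by rw [hKdef]; exact_mod_cast hk
      -- lower bound for the double sum
      have hterm : ∀ j ∈ Icc 1 k,
          X 1 ω + (if j ∈ Icc 2 k then X 2 ω else 0) ≤ ∑ i ∈ Icc 1 j, X i ω := by
        intro j hj
        rcases mem_Icc.mp hj with ⟨hj1, hjk⟩
        by_cases h2j : 2 ≤ j
        · rw [if_pos (mem_Icc.mpr ⟨h2j, hjk⟩)]
          have hss : ({1, 2} : Finset ℕ) ⊆ Icc 1 j := by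
            intro x hx
            simp only [mem_insert, mem_singleton] at hx
            rcases hx with rfl | rfl <;> (rw [mem_Icc]; omega)
          have := Finset.sum_le_sum_of_subset_of_nonneg hss
            (fun i _ _ => hωN i) (f := fun i => X i ω)
          simpa using this
        · rw [if_neg (by rw [mem_Icc]; omega)]
          simpa using Finset.single_le_sum (f := fun i => X i ω)
            (fun i _ => hωN i) (mem_Icc.mpr ⟨le_refl 1, hj1⟩)
      have hsum := Finset.sum_le_sum hterm
      rw [Finset.sum_add_distrib, Finset.sum_const, Finset.sum_ite_mem] at hsum
      have hinter : Icc 1 k ∩ Icc 2 k = Icc 2 k := by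
        ext x; simp only [mem_inter, mem_Icc]; omega
      rw [hinter, Finset.sum_const, Nat.card_Icc, Nat.card_Icc] at hsum
      -- hsum : (k+1-1) • X 1 ω + (k+1-2) • X 2 ω ≤ ∑ ...
      have hcard1 : k + 1 - 1 = k := by omega
      have hcard2 : ((k + 1 - 2 : ℕ) : ℝ) = K - 1 := by
        rw [hKdef, show k + 1 - 2 = k - 1 from by omega,
          Nat.cast_sub (by omega : 1 ≤ k)]; norm_num
      rw [hcard1] at hsum
      simp only [nsmul_eq_mul] at hsum
      rw [hcard2] at hsum
      -- now derive the contradiction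
      rw [hY k ω, hY1] at hle
      have hKpos : (0:ℝ) < K * (K + 1) := by nlinarith
      rw [div_mul_eq_mul_div, div_le_iff₀ hKpos] at hle
      -- hle : 2 * ∑ ≤ X 1 ω * (K * (K+1))
      have hT := hsum
      have hX1 : 0 ≤ X 1 ω := hωN 1
      nlinarith [hT, hle, hω1, hω2, hX1, hK,
        mul_le_mul_of_nonneg_left hT (by norm_num : (0:ℝ) ≤ 2),
        mul_pos (by linarith : (0:ℝ) < K - 1) (by linarith : (0:ℝ) < K)]
    -- conclude
    have hNmeas : MeasurableSet N := by
      rw [hNdef]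
      have : N = ⋂ i, X i ⁻¹' Set.Ici 0 := by
        ext ω; simp [hNdef, Set.mem_iInter]
      rw [show {ω | ∀ (i : ℕ), 0 ≤ X i ω} = ⋂ i, X i ⁻¹' Set.Ici 0 by
        ext ω; simp [Set.mem_iInter]]
      exact MeasurableSet.iInter fun i => (hmeas i) measurableSet_Ici
    have hBmeas : MeasurableSet (A1 ∩ A2 ∩ N) :=
      (((hmeas 1) measurableSet_Iio).inter ((hmeas 2) measurableSet_Ioi)).inter hNmeas
    have hBpos : 0 < μ (A1 ∩ A2 ∩ N) := by
      rw [measure_inter_conull' (measure_mono_null (fun ω hω => hω.2) hNc)]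
      exact hApos
    have hEc : μ E ≤ μ (A1 ∩ A2 ∩ N)ᶜ :=
      measure_mono (Set.subset_compl_comm.mp hsub)
    have hlt : μ E < 1 := by
      calc μ E ≤ μ (A1 ∩ A2 ∩ N)ᶜ := hEc
        _ = 1 - μ (A1 ∩ A2 ∩ N) := prob_compl_eq_one_sub hBmeas
        _ < 1 := ENNReal.sub_lt_self ENNReal.one_ne_top one_ne_zero (ne_of_gt hBpos)
    have := ENNReal.toReal_lt_toReal (measure_ne_top μ E) ENNReal.one_ne_top |>.mpr hlt
    simpa using this
  -- part 1
  have part1 : ∀ k : ℕ, 2 ≤ k → c k < ((k : ℝ) + 1) ^ k / ((k - 1).factorial : ℝ) := by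
    intro k hk
    have h := hc k hk
    have hlt := hElt k hk
    rw [h] at hlt
    have hP : (0:ℝ) < ((k : ℝ) + 1) ^ k := by positivity
    have hG : (0:ℝ) < ((k - 1).factorial : ℝ) := by positivity
    rw [div_lt_one hP] at hlt
    rw [lt_div_iff₀ hG]
    linarith
  refine ⟨part1, Real.exp 1, Real.exp_pos 1, fun k hk => ?_⟩
  exact le_trans (le_of_lt (part1 k hk)) (growth_bound k hk)
end

section
/- Let $L_n^{\{1;n\}}$ be the $(n-1)\times(n-1)$ matrix obtained from the tridiagonal matrix $L_n$ (rows of the form $(\frac{(k-2)(k-1)}{2}, -(k-1)k, \frac{k(k+1)}{2})$) by deleting its first row and last column. Then $L_n^{\{1;n\}}$ is invertible, and the unique solution of $L_n^{\{1;n\}}\mathbf{y} = -\mathbf{1}$ is $\mathbf{y}^* = (\frac{n-1}{2}, \frac{n-2}{3}, \ldots, \frac{2}{n-1}, \frac{1}{n})^\top$, i.e., $y^*_j = \frac{n-j}{j+1}$ for $1 \le j \le n-1$. Moreover, $L_n^{\{1;n\}}\mathbf{y} \ge 0$ implies $\mathbf{y} \le 0$ componentwise. -/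
/-!
The vector `y*` is positive and `L y* = -1 < 0`, while every off-diagonal entry of
`L = L_n^{1;n}` is nonnegative. For such a matrix a maximum principle holds: if `L y ≥ 0`
and `t = max_j y_j / y*_j` were positive, then `z = t y* - y ≥ 0` vanishes at a maximising
index `i`, so `(L z)_i ≥ 0`, whereas `(L z)_i = -t - (L y)_i < 0`. Applied to `±y` this
forces `L y = 0 → y = 0`, which gives invertibility and uniqueness.
-/

open Matrix Finset

section MaximumPrinciple

variable {ι : Type*} [Fintype ι]

theorem Matrix.nonpos_of_mulVec_nonneg {M : Matrix ι ι ℝ}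
    (hM : ∀ i j, i ≠ j → 0 ≤ M i j)
    {s : ι → ℝ} (hs : ∀ i, 0 < s i) (hMs : ∀ i, (M *ᵥ s) i < 0)
    {y : ι → ℝ} (hy : ∀ i, 0 ≤ (M *ᵥ y) i) (j : ι) : y j ≤ 0 := by
  by_contra! hj
  have : Nonempty ι := ⟨j⟩
  obtain ⟨i, hi⟩ := Finite.exists_max fun k => y k / s k
  set t := y i / s i
  have ht : 0 < t := (div_pos hj (hs j)).trans_le (hi j)
  have hz : ∀ k, 0 ≤ t * s k - y k := fun k => by
    linarith [(div_le_iff₀ (hs k)).mp (hi k)]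
  have hzi : t * s i - y i = 0 := by simp [t, div_mul_cancel₀ _ (hs i).ne']
  have hMz_nonneg : 0 ≤ (M *ᵥ (t • s - y)) i := by
    refine sum_nonneg fun k _ => ?_
    rcases eq_or_ne i k with rfl | hik
    · simp [hzi]
    · exact mul_nonneg (hM i k hik) (hz k)
  have hMz : (M *ᵥ (t • s - y)) i = t * (M *ᵥ s) i - (M *ᵥ y) i := by
    simp [mulVec_sub, mulVec_smul]
  linarith [mul_neg_of_pos_of_neg ht (hMs i), hy i]

theorem Matrix.isUnit_of_offDiag_nonneg [DecidableEq ι] {M : Matrix ι ι ℝ}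
    (hM : ∀ i j, i ≠ j → 0 ≤ M i j)
    {s : ι → ℝ} (hs : ∀ i, 0 < s i) (hMs : ∀ i, (M *ᵥ s) i < 0) : IsUnit M := by
  refine mulVec_injective_iff_isUnit.mp fun y y' h => funext fun j => ?_
  have h₁ := nonpos_of_mulVec_nonneg hM hs hMs (y := y - y') (by simp [mulVec_sub, h]) j
  have h₂ := nonpos_of_mulVec_nonneg hM hs hMs (y := y' - y) (by simp [mulVec_sub, h]) j
  simp only [Pi.sub_apply] at h₁ h₂
  linarith

end MaximumPrinciple

/-- Entry `(r, j)` (0-based) of `L_n^{1;n}`, i.e. entry `(r + 2, j + 1)` of `L_n`. -/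
noncomputable def reducedLEntry (r j : ℕ) : ℝ :=
  if j + 1 = r + 2 then ((r : ℝ) + 2) * ((r : ℝ) + 3) / 2
  else if j + 2 = r + 2 then -(((r : ℝ) + 1) * ((r : ℝ) + 2))
  else if j + 3 = r + 2 then (r : ℝ) * ((r : ℝ) + 1) / 2
  else 0

theorem reducedLEntry_nonneg_of_ne {r j : ℕ} (h : j ≠ r) : 0 ≤ reducedLEntry r j := by
  unfold reducedLEntry
  split_ifs <;> first | omega | positivity

theorem reducedLEntry_eq_add_ite (r j : ℕ) : reducedLEntry r j =
    (if j = r + 1 then ((r : ℝ) + 2) * ((r : ℝ) + 3) / 2 else 0) +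
    (if j = r then -(((r : ℝ) + 1) * ((r : ℝ) + 2)) else 0) +
    (if j = r - 1 then (r : ℝ) * ((r : ℝ) + 1) / 2 else 0) := by
  unfold reducedLEntry
  rcases Nat.eq_zero_or_pos r with rfl | hr
  · split_ifs <;> first | omega | simp
  · split_ifs <;> first | omega | ring

theorem sum_reducedLEntry_mul {p r : ℕ} (hr : r < p) (g : ℕ → ℝ) (hg : g p = 0) :
    ∑ j : Fin p, reducedLEntry r j * g j =
      ((r : ℝ) + 2) * ((r : ℝ) + 3) / 2 * g (r + 1) - ((r : ℝ) + 1) * ((r : ℝ) + 2) * g r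
        + (r : ℝ) * ((r : ℝ) + 1) / 2 * g (r - 1) := by
  rw [Fin.sum_univ_eq_sum_range (fun j => reducedLEntry r j * g j)]
  simp only [reducedLEntry_eq_add_ite, add_mul, ite_mul, zero_mul, sum_add_distrib, sum_ite_eq',
    mem_range]
  rw [if_pos hr, if_pos (show r - 1 < p by omega)]
  split_ifs with h
  · ring
  · rw [show r + 1 = p by omega, hg]
    ring

noncomputable def yStar (n j : ℕ) : ℝ := ((n : ℝ) - ((j : ℝ) + 1)) / ((j : ℝ) + 2)

theorem yStar_sub_one {n : ℕ} (hn : 1 ≤ n) : yStar n (n - 1) = 0 := by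
  simp [yStar, Nat.cast_sub hn]

theorem yStar_pos {n j : ℕ} (hj : j + 1 < n) : 0 < yStar n j := by
  have : (j : ℝ) + 1 < n := by exact_mod_cast hj
  exact div_pos (by linarith) (by positivity)

theorem reducedL_row_yStar (n r : ℕ) :
    ((r : ℝ) + 2) * ((r : ℝ) + 3) / 2 * yStar n (r + 1)
      - ((r : ℝ) + 1) * ((r : ℝ) + 2) * yStar n r
      + (r : ℝ) * ((r : ℝ) + 1) / 2 * yStar n (r - 1) = -1 := by
  rcases r with _ | r <;>
  · simp only [yStar, Nat.add_sub_cancel]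
    push_cast
    field_simp
    ring

theorem stmt_19_general (n : ℕ) (M : Matrix (Fin (n - 1)) (Fin (n - 1)) ℝ)
    (hM : ∀ r j : Fin (n - 1), M r j =
      -- 1-based row index `k = r.1 + 2`, 1-based column index `j' = j.1 + 1`
      if j.1 + 1 = r.1 + 2 then ((r.1 : ℝ) + 2) * ((r.1 : ℝ) + 3) / 2
      else if j.1 + 2 = r.1 + 2 then -(((r.1 : ℝ) + 1) * ((r.1 : ℝ) + 2))
      else if j.1 + 3 = r.1 + 2 then (r.1 : ℝ) * ((r.1 : ℝ) + 1) / 2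
      else 0)
    (ystar : Fin (n - 1) → ℝ)
    (hystar : ∀ j : Fin (n - 1), ystar j = ((n : ℝ) - ((j.1 : ℝ) + 1)) / ((j.1 : ℝ) + 2)) :
    IsUnit M ∧
    M.mulVec ystar = (fun _ => -1) ∧
    (∀ y : Fin (n - 1) → ℝ, M.mulVec y = (fun _ => -1) → y = ystar) ∧
    ∀ y : Fin (n - 1) → ℝ, (∀ i, 0 ≤ M.mulVec y i) → ∀ j, y j ≤ 0 := by
  have hL : ∀ r j, M r j = reducedLEntry r j := hM
  have hY : ∀ j, ystar j = yStar n j := hystar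
  have hoff : ∀ r j, r ≠ j → 0 ≤ M r j := fun r j h => by
    rw [hL]
    exact reducedLEntry_nonneg_of_ne (Fin.val_ne_of_ne h.symm)
  have hpos : ∀ j, 0 < ystar j := fun j => by
    rw [hY]
    exact yStar_pos (by omega)
  have hys : M *ᵥ ystar = fun _ => -1 := funext fun r => by
    simp only [mulVec, dotProduct, hL, hY]
    rw [sum_reducedLEntry_mul r.2 (yStar n) (yStar_sub_one (by have := r.2; omega)),
      reducedL_row_yStar]
  have hys_neg : ∀ i, (M *ᵥ ystar) i < 0 := by simp [hys]
  have hunit := isUnit_of_offDiag_nonneg hoff hpos hys_neg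
  exact ⟨hunit, hys, fun y hy => mulVec_injective_iff_isUnit.mpr hunit (hy.trans hys.symm),
    fun y hy => nonpos_of_mulVec_nonneg hoff hpos hys_neg hy⟩

/-- Let `M = L_n^{{1;n}}` be obtained from the tridiagonal matrix `L_n` (rows
`((k-2)(k-1)/2, -(k-1)k, k(k+1)/2)`) by deleting its first row and last column. Then
`M` is invertible, the unique solution of `M y = -1` is `y*_j = (n-j)/(j+1)`, and
`M y ≥ 0` implies `y ≤ 0` componentwise. Here row `r` of `M` corresponds to row
`k = r+2` of `L_n` and column `j` to column `j` of `L_n` (1-based). -/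
theorem stmt_19 (n : ℕ) (hn : 2 ≤ n) (M : Matrix (Fin (n - 1)) (Fin (n - 1)) ℝ)
    (hM : ∀ r j : Fin (n - 1), M r j =
      -- 1-based row index `k = r.1 + 2`, 1-based column index `j' = j.1 + 1`
      if j.1 + 1 = r.1 + 2 then ((r.1 : ℝ) + 2) * ((r.1 : ℝ) + 3) / 2
      else if j.1 + 2 = r.1 + 2 then -(((r.1 : ℝ) + 1) * ((r.1 : ℝ) + 2))
      else if j.1 + 3 = r.1 + 2 then (r.1 : ℝ) * ((r.1 : ℝ) + 1) / 2
      else 0)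
    (ystar : Fin (n - 1) → ℝ)
    (hystar : ∀ j : Fin (n - 1), ystar j = ((n : ℝ) - ((j.1 : ℝ) + 1)) / ((j.1 : ℝ) + 2)) :
    IsUnit M ∧
    M.mulVec ystar = (fun _ => -1) ∧
    (∀ y : Fin (n - 1) → ℝ, M.mulVec y = (fun _ => -1) → y = ystar) ∧
    ∀ y : Fin (n - 1) → ℝ, (∀ i, 0 ≤ M.mulVec y i) → ∀ j, y j ≤ 0 :=
  stmt_19_general n M hM ystar hystar
end
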